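/- Let V be a finite-dimensional F-vector space and let Q̃ : (F×V)* → F be a quadratic form. Then the following are equivalent: (a) the β-image of the translation group of V is contained in O'((F×V)*, Q̃), where the β-image of the translation x ↦ x + t is the map (a₀,a*) ↦ (a₀ − ⟨a*,t⟩, a*); (b) one of the following holds: (i) Q̃(1,0*) = 0 and the radical of the polar form of Q̃ equals F·(1,0*), or (ii) dim (F×V)* = 1, or (iii) dim (F×V)* = 2, Q̃(1,0*) ≠ 0, the radical of the polar form of Q̃ is {0}, and |F| = 2. -/

import Mathlib

/-! Setting: a field `F` and a finite-dimensional `F`-vector space `V`. The dual of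
`F × V` is identified with `F × V*` via the pairing `⟨(a₀,a*),(x₀,x)⟩ = a₀x₀ + ⟨a*,x⟩`.
For a quadratic form `Q`, its polar form is `QuadraticMap.polar Q` (the bilinear map
`Q.polarBilin`) and its radical is `LinearMap.ker Q.polarBilin`. -/

variable {F V : Type*} [Field F] [AddCommGroup V] [Module F V] [FiniteDimensional F V]

/-- The dual linear representation `β` of `AGL(V)` on `(F×V)* = F × V*`: for the affinity
`γ : x ↦ t + g x` (with `g ∈ GL(V)`, `t ∈ V`),
`γ^β (a₀, a*) = (a₀ - ⟨a* ∘ g⁻¹, t⟩, a* ∘ g⁻¹)`. -/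
def betaMap (g : V ≃ₗ[F] V) (t : V) :
    (F × Module.Dual F V) →ₗ[F] (F × Module.Dual F V) :=
  LinearMap.prod
    (LinearMap.fst F F (Module.Dual F V) -
      (Module.Dual.eval F V (g.symm t)).comp (LinearMap.snd F F (Module.Dual F V)))
    ((g.symm.toLinearMap.dualMap).comp (LinearMap.snd F F (Module.Dual F V)))

/-- Given a quadratic form `Q` on `V` whose induced map `D = Q.polarBilin` is bijective
(given here as the linear equivalence `e` with `↑e = Q.polarBilin`), the quadratic form
`Q^↑ : F × V* → F, (a₀, a*) ↦ Q (D⁻¹ a*)`. -/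
def qUp (Q : QuadraticForm F V) (e : V ≃ₗ[F] Module.Dual F V) :
    QuadraticForm F (F × Module.Dual F V) :=
  Q.comp (e.symm.toLinearMap ∘ₗ LinearMap.snd F F (Module.Dual F V))

/-- Given a quadratic form `Q̃` on `F × V*` such that `π ∘ D̃ ∘ π^T : V* → V` is invertible
(given here as the linear equivalence `T`, characterised by
`∀ a b, b (T a) = polar Q̃ (0,a) (0,b)`), the quadratic form
`Q̃^↓ : V → F, x ↦ Q̃ (0, T⁻¹ x)`. -/
def qDown (Qt : QuadraticForm F (F × Module.Dual F V)) (T : Module.Dual F V ≃ₗ[F] V) :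
    QuadraticForm F V :=
  Qt.comp ((LinearMap.inr F F (Module.Dual F V)) ∘ₗ T.symm.toLinearMap)

/-- The weak orthogonal group `O'(W,Q)` of a metric vector space, as a set of linear
endomorphisms: bijective isometries fixing the radical elementwise. -/
def wOrth {W : Type*} [AddCommGroup W] [Module F W] (Qt : QuadraticForm F W) :
    Set (W →ₗ[F] W) :=
  {φ | Function.Bijective φ ∧ (∀ w, Qt (φ w) = Qt w) ∧
    ∀ w ∈ LinearMap.ker Qt.polarBilin, φ w = w}

/-- The `β`-image `AO(V,Q)^β` of the motion group of `(V,Q)`. -/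
def motionBetaSet (Q : QuadraticForm F V) :
    Set ((F × Module.Dual F V) →ₗ[F] (F × Module.Dual F V)) :=
  {φ | ∃ (g : V ≃ₗ[F] V) (t : V), (∀ x, Q (g x) = Q x) ∧ φ = betaMap g t}

/-- The `β`-image `AO'(V,Q)^β` of the weak motion group of `(V,Q)`. -/
def wMotionBetaSet (Q : QuadraticForm F V) :
    Set ((F × Module.Dual F V) →ₗ[F] (F × Module.Dual F V)) :=
  {φ | ∃ (g : V ≃ₗ[F] V) (t : V), (∀ x, Q (g x) = Q x) ∧
    (∀ x ∈ LinearMap.ker Q.polarBilin, g x = x) ∧ φ = betaMap g t}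

/-! Write `e = (1,0)` and `ℓ = polar Q̃ · e`. The translation by `t` acts on `F × V*` as
`w ↦ w - ⟨w.2, t⟩ • e`, and `Q̃ (w - s • e) = Q̃ w + s² Q̃ e - s ℓ w`; since `⟨w.2, t⟩` runs through
all of `F` when `w.2 ≠ 0`, the translations are isometries iff `ℓ w = s Q̃ e` for all `w ∉ F e`
and `s ≠ 0`, and they fix the radical iff the radical lies in `F e`.
If `Q̃ e = 0`, then `ℓ` vanishes off the line `F e`, hence everywhere, so `e` is in the radical.
If `Q̃ e ≠ 0`, then `s = 1` for every `s ≠ 0`, so `F = 𝔽₂`; additivity of `ℓ` on `(0,f) + (0,g)`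
forces `V*` to be a line, and pairing a radical vector `a • e` with `(0,f)` gives `a Q̃ e = 0`. -/

open QuadraticMap Module

theorem Cardinal.mk_eq_two_iff_forall_eq_zero_or_eq_one {α : Type*} [Zero α] [One α]
    [NeZero (1 : α)] : Cardinal.mk α = 2 ↔ ∀ a : α, a = 0 ∨ a = 1 := by
  rw [Cardinal.mk_eq_two_iff' 0]
  constructor
  · rintro ⟨y, -, hy⟩ a
    exact or_iff_not_imp_left.mpr fun ha => (hy a ha).trans (hy 1 one_ne_zero).symm
  · exact fun h => ⟨1, one_ne_zero, fun a ha => (h a).resolve_left ha⟩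

theorem QuadraticMap.map_sub_smul {R M : Type*} [CommRing R] [AddCommGroup M] [Module R M]
    (Q : QuadraticForm R M) (x y : M) (s : R) :
    Q (x - s • y) = Q x + s ^ 2 * Q y - s * polar Q x y := by
  rw [sub_eq_add_neg, ← neg_smul, QuadraticMap.map_add Q, QuadraticMap.map_smul,
    polar_smul_right, smul_eq_mul, smul_eq_mul]
  ring

theorem QuadraticMap.mem_ker_polarBilin_iff {R M : Type*} [CommRing R] [AddCommGroup M]
    [Module R M] (Q : QuadraticForm R M) (x : M) :
    x ∈ LinearMap.ker Q.polarBilin ↔ ∀ y, polar Q x y = 0 := by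
  simp [LinearMap.ext_iff]

section
omit [FiniteDimensional F V]

theorem betaMap_apply (g : V ≃ₗ[F] V) (t : V) (w : F × Dual F V) :
    betaMap g t w = (w.1 - w.2 (g.symm t), w.2 ∘ₗ g.symm.toLinearMap) := rfl

theorem betaMap_bijective (g : V ≃ₗ[F] V) (t : V) : Function.Bijective (betaMap g t) := by
  refine Function.bijective_iff_has_inverse.mpr
    ⟨betaMap g.symm (-g.symm t), fun w => ?_, fun w => ?_⟩ <;>
  ext <;> simp [betaMap_apply]

theorem betaMap_refl_apply (t : V) (w : F × Dual F V) :
    betaMap (LinearEquiv.refl F V) t w = w - w.2 t • (1, 0) := by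
  ext <;> simp [betaMap_apply]

theorem snd_eq_zero_iff_mem_span (w : F × Dual F V) :
    w.2 = 0 ↔ w ∈ Submodule.span F {((1 : F), (0 : Dual F V))} := by
  rw [Submodule.mem_span_singleton]
  refine ⟨fun h => ⟨w.1, by ext <;> simp [h]⟩, ?_⟩
  rintro ⟨a, rfl⟩
  simp

variable (Qt : QuadraticForm F (F × Dual F V))

theorem betaMap_refl_mem_wOrth_iff (t : V) :
    betaMap (LinearEquiv.refl F V) t ∈ wOrth Qt ↔
      (∀ w, Qt (w - w.2 t • (1, 0)) = Qt w) ∧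
        ∀ w ∈ LinearMap.ker Qt.polarBilin, w.2 t = 0 := by
  simp only [wOrth, Set.mem_ofPred_eq, betaMap_refl_apply, sub_eq_self, smul_eq_zero,
    Prod.mk_eq_zero, one_ne_zero, false_and, or_false]
  exact and_iff_right (betaMap_bijective _ t)

theorem forall_map_sub_smul_eq_iff :
    (∀ (t : V) w, Qt (w - w.2 t • (1, 0)) = Qt w) ↔
      ∀ w : F × Dual F V, w.2 ≠ 0 → ∀ s ≠ 0, polar Qt w (1, 0) = s * Qt (1, 0) := by
  have key : ∀ w (s : F),
      Qt (w - s • (1, 0)) = Qt w ↔ s = 0 ∨ polar Qt w (1, 0) = s * Qt (1, 0) := by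
    intro w s
    rw [map_sub_smul, show ∀ a b c : F, a + s ^ 2 * b - s * c = a + s * (s * b - c) by
      intros; ring, add_eq_left, mul_eq_zero, sub_eq_zero, eq_comm (a := s * _)]
  constructor
  · intro h w hw s hs
    obtain ⟨t, rfl⟩ := LinearMap.surjective_of_ne_zero hw s
    exact ((key w _).mp (h t w)).resolve_left hs
  · intro h t w
    refine (key w _).mpr (or_iff_not_imp_left.mpr fun hs => h w ?_ _ hs)
    rintro hw
    exact hs (by rw [hw, LinearMap.zero_apply])

theorem forall_betaMap_refl_mem_wOrth_iff :
    (∀ t : V, betaMap (LinearEquiv.refl F V) t ∈ wOrth Qt) ↔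
      (∀ w : F × Dual F V, w.2 ≠ 0 → ∀ s ≠ 0, polar Qt w (1, 0) = s * Qt (1, 0)) ∧
        ∀ w ∈ LinearMap.ker Qt.polarBilin, w.2 = 0 := by
  simp only [betaMap_refl_mem_wOrth_iff, forall_and, forall_map_sub_smul_eq_iff,
    LinearMap.ext_iff, LinearMap.zero_apply]
  exact and_congr_right' ⟨fun h w hw t => h t w hw, fun h t w hw => h w hw t⟩

-- A linear form vanishing off a line of a space of dimension at least two vanishes.
theorem ker_polarBilin_eq_span_of_polar_base_eq_zero [Nontrivial (Dual F V)]
    (hℓ : ∀ w : F × Dual F V, w.2 ≠ 0 → polar Qt w (1, 0) = 0)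
    (hrad : ∀ w ∈ LinearMap.ker Qt.polarBilin, w.2 = 0) :
    LinearMap.ker Qt.polarBilin = Submodule.span F {((1 : F), (0 : Dual F V))} := by
  have hbase : ((1 : F), (0 : Dual F V)) ∈ LinearMap.ker Qt.polarBilin := by
    refine (mem_ker_polarBilin_iff Qt _).mpr fun y => ?_
    rw [polar_comm]
    obtain ⟨f, hf⟩ := exists_ne (0 : Dual F V)
    by_cases hy : y.2 = 0
    · have h := polar_add_left Qt y (0, f) (1, 0)
      rw [hℓ _ (by simpa [hy]), hℓ (0, f) hf] at h
      linear_combination -h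
    · exact hℓ y hy
  refine le_antisymm (fun w hw => (snd_eq_zero_iff_mem_span w).mp (hrad w hw)) ?_
  rwa [Submodule.span_le, Set.singleton_subset_iff]

theorem finrank_dual_eq_one_of_polar_base_eq
    (hℓ : ∀ w : F × Dual F V, w.2 ≠ 0 → polar Qt w (1, 0) = Qt (1, 0))
    (hc : Qt (1, 0) ≠ 0) {f : Dual F V} (hf : f ≠ 0) : finrank F (Dual F V) = 1 := by
  refine (finrank_eq_one_iff_of_nonzero' f hf).mpr fun g => ?_
  by_cases hg : g = 0
  · exact ⟨0, by rw [hg, zero_smul]⟩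
  by_cases hfg : f + g = 0
  · exact ⟨-1, by rw [neg_one_smul, neg_eq_of_add_eq_zero_right hfg]⟩
  have h := polar_add_left Qt ((0 : F), f) (0, g) (1, 0)
  rw [Prod.mk_add_mk, add_zero, hℓ _ hfg, hℓ _ hf, hℓ _ hg] at h
  exact absurd (by linear_combination -h) hc

theorem ker_polarBilin_eq_bot_of_polar_base_eq
    (hℓ : ∀ w : F × Dual F V, w.2 ≠ 0 → polar Qt w (1, 0) = Qt (1, 0))
    (hc : Qt (1, 0) ≠ 0) (hrad : ∀ w ∈ LinearMap.ker Qt.polarBilin, w.2 = 0)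
    {f : Dual F V} (hf : f ≠ 0) : LinearMap.ker Qt.polarBilin = ⊥ := by
  refine (Submodule.eq_bot_iff _).mpr fun w hw => ?_
  have hw' : w = w.1 • (1, 0) := by ext <;> simp [hrad w hw]
  have h := (mem_ker_polarBilin_iff Qt w).mp hw (0, f)
  rw [hw', polar_smul_left, polar_comm, hℓ _ hf, smul_eq_mul] at h
  rw [hw', (mul_eq_zero.mp h).resolve_right hc, zero_smul]

-- Over `𝔽₂` the polar form is alternating, so if `polar Q̃ w (1,0) = 0` then `w` is orthogonal to
-- the basis `(1,0), w` and lies in the radical.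
theorem polar_base_eq_of_ker_polarBilin_eq_bot (hF : ∀ s : F, s = 0 ∨ s = 1)
    (hfr : finrank F (Dual F V) = 1) (hk : LinearMap.ker Qt.polarBilin = ⊥) (hc : Qt (1, 0) ≠ 0)
    {w : F × Dual F V} (hw : w.2 ≠ 0) : polar Qt w (1, 0) = Qt (1, 0) := by
  have two : (2 : F) = 0 := (hF 2).resolve_right fun h => one_ne_zero (by linear_combination h)
  rcases hF (polar Qt w (1, 0)) with h0 | h1
  · refine absurd ?_ hw
    have hmem : w ∈ LinearMap.ker Qt.polarBilin := by
      refine (mem_ker_polarBilin_iff Qt w).mpr fun y => ?_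
      obtain ⟨b, hb⟩ := (finrank_eq_one_iff_of_nonzero' w.2 hw).mp hfr y.2
      have hy : y = (y.1 - b * w.1) • (1, 0) + b • w := by ext <;> simp [← hb]
      rw [hy, polar_add_right, polar_smul_right, polar_smul_right, polar_self, h0]
      simp [two]
    rw [hk, Submodule.mem_bot] at hmem
    rw [hmem, Prod.snd_zero]
  · rw [h1, (hF _).resolve_left hc]

end

/-- Corollary 5.8: the `β`-image of the translation group of `V` (the translation
`x ↦ x + t` having `β`-image `betaMap 1 t : (a₀,a*) ↦ (a₀ - ⟨a*,t⟩, a*)`) is contained in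
`O'((F×V)*, Q̃)` iff (i) `Q̃ (1,0*) = 0` and the radical of the polar form of `Q̃` is
`F·(1,0*)`, or (ii) `dim (F×V)* = 1`, or (iii) `dim (F×V)* = 2`, `Q̃ (1,0*) ≠ 0`, the
radical of the polar form of `Q̃` is `{0}`, and `|F| = 2`. -/
theorem stmt15 (Qt : QuadraticForm F (F × Module.Dual F V)) :
    (∀ t : V, betaMap (LinearEquiv.refl F V) t ∈ wOrth Qt) ↔
      ((Qt (1, 0) = 0 ∧ LinearMap.ker Qt.polarBilin =
          Submodule.span F {((1 : F), (0 : Module.Dual F V))}) ∨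
        Module.finrank F (F × Module.Dual F V) = 1 ∨
        (Module.finrank F (F × Module.Dual F V) = 2 ∧ Qt (1, 0) ≠ 0 ∧
          LinearMap.ker Qt.polarBilin = ⊥ ∧ Cardinal.mk F = 2)) := by
  rw [forall_betaMap_refl_mem_wOrth_iff, finrank_prod, finrank_self,
    Cardinal.mk_eq_two_iff_forall_eq_zero_or_eq_one]
  rcases subsingleton_or_nontrivial (Dual F V) with hD | hD
  · refine iff_of_true ⟨fun w hw => absurd (Subsingleton.elim _ _) hw,
      fun w _ => Subsingleton.elim _ _⟩ (Or.inr (Or.inl ?_))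
    rw [finrank_zero_of_subsingleton]
  obtain ⟨f, hf⟩ := exists_ne (0 : Dual F V)
  have hfr : finrank F (Dual F V) ≠ 0 := finrank_pos.ne'
  constructor
  · rintro ⟨hℓ, hrad⟩
    have hℓ₁ : ∀ w : F × Dual F V, w.2 ≠ 0 → polar Qt w (1, 0) = Qt (1, 0) :=
      fun w hw => by simpa using hℓ w hw 1 one_ne_zero
    by_cases hc : Qt (1, 0) = 0
    · exact Or.inl ⟨hc,
        ker_polarBilin_eq_span_of_polar_base_eq_zero Qt (by simpa [hc] using hℓ₁) hrad⟩
    refine Or.inr (Or.inr ⟨by rw [finrank_dual_eq_one_of_polar_base_eq Qt hℓ₁ hc hf], hc,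
      ker_polarBilin_eq_bot_of_polar_base_eq Qt hℓ₁ hc hrad hf,
      fun s => or_iff_not_imp_left.mpr fun hs => ?_⟩)
    exact mul_right_cancel₀ hc (by rw [← hℓ (0, f) hf s hs, hℓ₁ (0, f) hf, one_mul])
  · rintro (⟨hc, hk⟩ | h1 | ⟨h2, hc, hk, hF⟩)
    · have hbase := (mem_ker_polarBilin_iff Qt _).mp (hk ▸ Submodule.mem_span_singleton_self _)
      exact ⟨fun w _ s _ => by rw [polar_comm, hbase, hc, mul_zero],
        fun w hw => (snd_eq_zero_iff_mem_span w).mpr (hk ▸ hw)⟩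
    · omega
    · refine ⟨fun w hw s hs => ?_, fun w hw => ?_⟩
      · rw [(hF s).resolve_left hs, one_mul]
        exact polar_base_eq_of_ker_polarBilin_eq_bot Qt hF (by omega) hk hc hw
      · rw [hk, Submodule.mem_bot] at hw
        rw [hw, Prod.snd_zero]
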